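/- arXiv:1307.0329 — 2 statements merged into one kernel-verified Lean document; each statement's English description precedes it below -/
import Mathlib

section
/- For fixed v with |v| < 1 and α_j = 1 - 1/j², the partial products G_N(v) = ∏_{j=1}^N (1 - v·α_j) satisfy G_N(v) = (1-v)^N · (sinh(π√(v/(1-v))) / (π√(v/(1-v)))) · (1 + O(1/N)) as N → ∞; in particular, G_N(v)/(1-v)^N converges to sinh(π√(v/(1-v)))/(π√(v/(1-v))). -/
/-!
Since `1 - v (1 - 1/j²) = (1 - v)(1 + x²/j²)` with `x² = v/(1-v)`, we have
`G_N(v) = (1-v)^N P_N` where `P_N = ∏_{j ≤ N} (1 + x²/j²)` are the partial products of Euler's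
product for `sinh(πx)/(πx)`, obtained from the sine product at `ix`. The `P_N` increase to their
limit `L`, and `L / P_N = ∏_{j > N} (1 + x²/j²) ≤ exp (x² ∑_{j > N} 1/j²) ≤ exp (2x²/(N+1))`,
so `P_N / L - 1` lies in `[-2x²/(N+1), 0]`.
-/

open Filter Real Finset Topology

theorem Real.tendsto_euler_sinh_prod (x : ℝ) :
    Tendsto (fun n : ℕ => π * x * ∏ j ∈ range n, (1 + x ^ 2 / ((j : ℝ) + 1) ^ 2))
      atTop (𝓝 (sinh (π * x))) := by
  have h := (Complex.continuous_im.tendsto _).comp (Complex.tendsto_euler_sin_prod (x * Complex.I))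
  convert h using 1
  · ext n
    have hprod : ∏ j ∈ range n, (1 - ((x : ℂ) * Complex.I) ^ 2 / ((j : ℂ) + 1) ^ 2) =
        ((∏ j ∈ range n, (1 + x ^ 2 / ((j : ℝ) + 1) ^ 2) : ℝ) : ℂ) := by
      push_cast
      refine prod_congr rfl fun j _ => ?_
      rw [mul_pow, Complex.I_sq]
      ring
    rw [Function.comp_apply, hprod, ← mul_assoc, mul_right_comm, ← Complex.ofReal_mul,
      Complex.im_mul_ofReal, Complex.mul_I_im, Complex.ofReal_re]
    ring
  · rw [← mul_assoc, ← Complex.ofReal_mul, Complex.sin_mul_I, ← Complex.ofReal_sinh,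
      Complex.mul_I_im, Complex.ofReal_re]

theorem Real.tendsto_prod_Icc_one_add_sq_div_sq {x : ℝ} (hx : x ≠ 0) :
    Tendsto (fun n : ℕ => ∏ j ∈ Icc 1 n, (1 + x ^ 2 / (j : ℝ) ^ 2))
      atTop (𝓝 (sinh (π * x) / (π * x))) := by
  have hπx : π * x ≠ 0 := mul_ne_zero pi_ne_zero hx
  refine ((tendsto_euler_sinh_prod x).div_const (π * x)).congr fun n => ?_
  rw [mul_div_cancel_left₀ _ hπx, ← Ico_add_one_right_eq_Icc, prod_Ico_eq_prod_range,
    add_tsub_cancel_right]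
  exact prod_congr rfl fun j _ => by push_cast; ring

theorem abs_div_sub_one_le_of_le_of_le_mul_exp {p L t : ℝ} (hL : 0 < L) (hpL : p ≤ L)
    (hLp : L ≤ p * exp t) : |p / L - 1| ≤ t := by
  have hlow : exp (-t) ≤ p / L := by
    rw [le_div_iff₀ hL, exp_neg, inv_mul_le_iff₀ (exp_pos t), mul_comm]
    exact hLp
  have hup : p / L ≤ 1 := (div_le_one hL).mpr hpL
  have := add_one_le_exp (-t)
  rw [abs_le]
  constructor <;> linarith

section ProdOneAddDivSq

variable {a : ℝ}

theorem monotone_prod_Icc_one_add_div_sq (ha : 0 ≤ a) :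
    Monotone fun n : ℕ => ∏ j ∈ Icc 1 n, (1 + a / (j : ℝ) ^ 2) :=
  (prod_mono_set_of_one_le fun j => le_add_of_nonneg_right (by positivity)).comp
    fun _ _ hnm => Icc_subset_Icc_right hnm

theorem prod_Ioc_one_add_div_sq_le_exp (ha : 0 ≤ a) (n m : ℕ) :
    ∏ j ∈ Ioc n m, (1 + a / (j : ℝ) ^ 2) ≤ exp (2 * a / (n + 1)) := by
  refine (prod_one_add_le_exp_sum _ fun j => by positivity).trans (exp_le_exp.mpr ?_)
  calc ∑ j ∈ Ioc n m, a / (j : ℝ) ^ 2 = a * ∑ j ∈ Ioo n (m + 1), ((j : ℝ) ^ 2)⁻¹ := by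
        rw [Ioo_add_one_right_eq_Ioc, mul_sum]
        simp only [div_eq_mul_inv]
    _ ≤ a * (2 / (n + 1)) := mul_le_mul_of_nonneg_left (sum_Ioo_inv_sq_le n (m + 1)) ha
    _ = 2 * a / (n + 1) := by ring

theorem le_prod_Icc_one_add_div_sq_mul_exp (ha : 0 ≤ a) {L : ℝ}
    (hL : Tendsto (fun n : ℕ => ∏ j ∈ Icc 1 n, (1 + a / (j : ℝ) ^ 2)) atTop (𝓝 L)) (n : ℕ) :
    L ≤ (∏ j ∈ Icc 1 n, (1 + a / (j : ℝ) ^ 2)) * exp (2 * a / (n + 1)) := by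
  refine le_of_tendsto hL ((eventually_ge_atTop n).mono fun m hnm => ?_)
  have hIcc (k : ℕ) : Icc 1 k = Ioc 0 k := Icc_add_one_left_eq_Ioc 0 k
  rw [hIcc, hIcc, ← prod_Ioc_consecutive _ n.zero_le hnm]
  exact mul_le_mul_of_nonneg_left (prod_Ioc_one_add_div_sq_le_exp ha n m)
    (prod_nonneg fun j _ => by positivity)

theorem one_le_of_tendsto_prod_Icc_one_add_div_sq (ha : 0 ≤ a) {L : ℝ}
    (hL : Tendsto (fun n : ℕ => ∏ j ∈ Icc 1 n, (1 + a / (j : ℝ) ^ 2)) atTop (𝓝 L)) : 1 ≤ L := by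
  simpa using (monotone_prod_Icc_one_add_div_sq ha).ge_of_tendsto hL 0

theorem abs_prod_Icc_one_add_div_sq_div_sub_one_le (ha : 0 ≤ a) {L : ℝ}
    (hL : Tendsto (fun n : ℕ => ∏ j ∈ Icc 1 n, (1 + a / (j : ℝ) ^ 2)) atTop (𝓝 L)) (n : ℕ) :
    |(∏ j ∈ Icc 1 n, (1 + a / (j : ℝ) ^ 2)) / L - 1| ≤ 2 * a / (n + 1) :=
  abs_div_sub_one_le_of_le_of_le_mul_exp
    (zero_lt_one.trans_le (one_le_of_tendsto_prod_Icc_one_add_div_sq ha hL))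
    ((monotone_prod_Icc_one_add_div_sq ha).ge_of_tendsto hL n)
    (le_prod_Icc_one_add_div_sq_mul_exp ha hL n)

end ProdOneAddDivSq

theorem one_sub_mul_one_sub_inv_eq {v : ℝ} (hv : v ≠ 1) (y : ℝ) :
    1 - v * (1 - 1 / y) = (1 - v) * (1 + v / (1 - v) / y) := by
  rcases eq_or_ne y 0 with rfl | hy
  · simp
  · have : 1 - v ≠ 0 := sub_ne_zero.mpr hv.symm
    field_simp
    ring

/-- **Example 1 (Böttcher).** For `0 < v < 1` and `α_j = 1 - 1/j²`, the partial products
`G_N(v) = ∏_{j=1}^N (1 - v α_j)` satisfy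
`G_N(v) = (1-v)^N · (sinh(π√(v/(1-v)))/(π√(v/(1-v)))) · (1 + O(1/N))`;
in particular `G_N(v)/(1-v)^N` converges to `sinh(π√(v/(1-v)))/(π√(v/(1-v)))`. -/
theorem stmt0 (v : ℝ) (hv0 : 0 < v) (hv1 : v < 1)
    (α : ℕ → ℝ) (hα : ∀ j : ℕ, 1 ≤ j → α j = 1 - 1 / (j : ℝ) ^ 2)
    (G : ℕ → ℝ) (hG : ∀ N, G N = ∏ j ∈ Finset.Icc 1 N, (1 - v * α j)) :
    (∃ C : ℝ, ∃ ε : ℕ → ℝ, (∀ N : ℕ, 1 ≤ N → |ε N| ≤ C / N) ∧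
      ∀ N : ℕ, 1 ≤ N → G N = (1 - v) ^ N *
        (Real.sinh (π * Real.sqrt (v / (1 - v))) / (π * Real.sqrt (v / (1 - v)))) *
        (1 + ε N)) ∧
    Tendsto (fun N : ℕ => G N / (1 - v) ^ N) atTop
      (nhds (Real.sinh (π * Real.sqrt (v / (1 - v))) / (π * Real.sqrt (v / (1 - v))))) := by
  have h1v : 0 < 1 - v := sub_pos.mpr hv1
  have ha : 0 < v / (1 - v) := div_pos hv0 h1v
  set a := v / (1 - v)
  set L := sinh (π * √a) / (π * √a)
  set P := fun N : ℕ => ∏ j ∈ Icc 1 N, (1 + a / (j : ℝ) ^ 2)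
  have hGP (N : ℕ) : G N = (1 - v) ^ N * P N := by
    rw [hG, prod_congr rfl fun j hj => by
        rw [hα j (mem_Icc.mp hj).1, one_sub_mul_one_sub_inv_eq hv1.ne],
      prod_mul_distrib, prod_const, Nat.card_Icc, add_tsub_cancel_right]
  have hPL : Tendsto P atTop (𝓝 L) := by
    simpa only [sq_sqrt ha.le] using tendsto_prod_Icc_one_add_sq_div_sq (sqrt_pos.mpr ha).ne'
  have hL : L ≠ 0 :=
    (zero_lt_one.trans_le (one_le_of_tendsto_prod_Icc_one_add_div_sq ha.le hPL)).ne'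
  refine ⟨⟨2 * a, fun N => P N / L - 1, fun N hN => ?_, fun N _ => ?_⟩, ?_⟩
  · refine (abs_prod_Icc_one_add_div_sq_div_sub_one_le ha.le hPL N).trans ?_
    gcongr
    linarith
  · rw [hGP, add_sub_cancel, mul_assoc, mul_div_cancel₀ _ hL]
  · exact hPL.congr fun N => by rw [hGP, mul_div_cancel_left₀ _ (pow_ne_zero _ h1v.ne')]
end

section
/- Let α_j ∈ 𝔻 for j ≥ 1 with ∑_{j=1}^∞ (1 - |α_j|) < ∞. Then for each z ∈ 𝔻 the infinite Blaschke product B(z) = ∏_{j=1}^∞ B_{α_j}(z) converges, and the partial products u_N(z) = ∏_{j=1}^N B_{α_j}(z) converge to B(z) for every z ∈ 𝔻. -/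
open Filter Finset Complex

/-- The normalized Blaschke factor `B_α(z) = (-ᾱ/|α|)·(z-α)/(1-ᾱz)`,
with the convention `B_0(z) = z`. -/
noncomputable def blaschkeFactor (α z : ℂ) : ℂ :=
  if α = 0 then z
  else (-(starRingEnd ℂ) α / ‖α‖) * ((z - α) / (1 - (starRingEnd ℂ) α * z))

/-!
Each factor is close to `1`: `|B_α(z) - 1| ≤ (1 - |α|)(1 + |z|)/(1 - |z|)`, because
`B_α(z) - 1 = (|α| - 1)(uz + 1)/(1 - ᾱz)` with `u = ᾱ/|α|` unimodular. For fixed `z ∈ 𝔻` the series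
`∑ |B_{α_j}(z) - 1|` is therefore dominated by the Blaschke sum, and a product `∏ (1 + a_j)`
with `∑ |a_j| < ∞` converges in `ℂ`.
-/

open ComplexConjugate

lemma one_sub_norm_le_norm_one_sub_conj_mul {α z : ℂ} (hα : ‖α‖ ≤ 1) :
    1 - ‖z‖ ≤ ‖1 - conj α * z‖ := by
  have : ‖conj α * z‖ ≤ ‖z‖ := by
    rw [norm_mul, RCLike.norm_conj]
    exact mul_le_of_le_one_left (norm_nonneg z) hα
  calc 1 - ‖z‖ ≤ ‖(1 : ℂ)‖ - ‖conj α * z‖ := by rw [norm_one]; linarith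
    _ ≤ ‖1 - conj α * z‖ := norm_sub_norm_le _ _

lemma blaschkeFactor_sub_one {α z : ℂ} (hα : α ≠ 0) (hαz : 1 - conj α * z ≠ 0) :
    blaschkeFactor α z - 1 = (‖α‖ - 1) * (conj α / ‖α‖ * z + 1) / (1 - conj α * z) := by
  have hnorm : (‖α‖ : ℂ) ≠ 0 := by simpa using hα
  have hconj : conj α * α = (‖α‖ : ℂ) ^ 2 := by
    rw [mul_comm, mul_conj, normSq_eq_norm_sq]; push_cast; ring
  rw [blaschkeFactor, if_neg hα]
  field_simp
  linear_combination hconj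

lemma norm_blaschkeFactor_sub_one_le {α z : ℂ} (hα : ‖α‖ ≤ 1) (hz : ‖z‖ < 1) :
    ‖blaschkeFactor α z - 1‖ ≤ (1 - ‖α‖) * ((1 + ‖z‖) / (1 - ‖z‖)) := by
  have hz' : 0 < 1 - ‖z‖ := by linarith
  have hden := one_sub_norm_le_norm_one_sub_conj_mul (z := z) hα
  by_cases h0 : α = 0
  · simp only [blaschkeFactor, h0, norm_zero, sub_zero, one_mul]
    calc ‖z - 1‖ ≤ ‖z‖ + ‖(1 : ℂ)‖ := norm_sub_le z 1
      _ = (1 + ‖z‖) / 1 := by rw [norm_one, div_one, add_comm]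
      _ ≤ (1 + ‖z‖) / (1 - ‖z‖) := by gcongr; linarith [norm_nonneg z]
  have hnum : ‖conj α / ‖α‖ * z + 1‖ ≤ 1 + ‖z‖ := by
    have hu : ‖conj α / (‖α‖ : ℂ)‖ = 1 := by
      rw [norm_div, RCLike.norm_conj, norm_real, Real.norm_of_nonneg (norm_nonneg α),
        div_self (norm_ne_zero_iff.mpr h0)]
    calc _ ≤ ‖conj α / ‖α‖ * z‖ + ‖(1 : ℂ)‖ := norm_add_le _ _
      _ = 1 + ‖z‖ := by rw [norm_mul, hu, norm_one]; ring
  have hcoef : ‖(‖α‖ - 1 : ℂ)‖ = 1 - ‖α‖ := by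
    rw [← norm_neg, show -((‖α‖ : ℂ) - 1) = ((1 - ‖α‖ : ℝ) : ℂ) by push_cast; ring,
      norm_real, Real.norm_of_nonneg (by linarith)]
  rw [blaschkeFactor_sub_one h0 (norm_pos_iff.mp (hz'.trans_le hden)), norm_div, norm_mul,
    hcoef, mul_div_assoc]
  gcongr

/-- If `α_j ∈ 𝔻` satisfy the Blaschke condition `∑ (1 - |α_j|) < ∞`, then for each
`z ∈ 𝔻` the infinite Blaschke product `B(z) = ∏_{j=1}^∞ B_{α_j}(z)` converges, i.e. the
partial products `u_N(z) = ∏_{j=1}^N B_{α_j}(z)` converge to a limit `B(z)`. -/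
theorem stmt10 (α : ℕ → ℂ) (hα : ∀ j, ‖α j‖ < 1)
    (hsum : Summable (fun j => 1 - ‖α j‖)) :
    ∃ B : ℂ → ℂ, ∀ z : ℂ, ‖z‖ < 1 →
      Tendsto (fun N : ℕ => ∏ j ∈ Finset.range N, blaschkeFactor (α j) z)
        atTop (nhds (B z)) := by
  refine ⟨fun z => ∏' j, blaschkeFactor (α j) z, fun z hz => ?_⟩
  have hfactors : Summable fun j => ‖blaschkeFactor (α j) z - 1‖ :=
    (hsum.mul_right _).of_nonneg_of_le (fun _ => norm_nonneg _)
      fun j => norm_blaschkeFactor_sub_one_le (hα j).le hz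
  have hprod : Multipliable fun j => blaschkeFactor (α j) z := by
    simpa using multipliable_one_add_of_summable hfactors
  exact hprod.hasProd.tendsto_prod_nat
end
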